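/- arXiv:2207.05628 — 2 statements merged into one kernel-verified Lean document; each statement's English description precedes it below -/
import Mathlib

section
/- If F : ℂ^d → ℂ is holomorphic (entire in d complex variables) and vanishes on a Lebesgue-measurable subset Y ⊆ ℝ^d ⊆ ℂ^d of positive d-dimensional Lebesgue measure, then F vanishes identically on ℂ^d. -/
open MeasureTheory

open Filter Set Topology

/-!
Induct on `d` using Fubini. Let `Z ⊆ ℝ^(d+1)` be the real zero set of `F`; it is closed, hence
measurable. If `Z` has positive measure, then so does the set `A` of `t ∈ ℝ` whose slice
`{w | (t, w) ∈ Z}` has positive measure, and by induction `F (t, ·) = 0` for every `t ∈ A`.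
Hence for each `w` the entire function `F (·, w)` of one variable vanishes on `A`, which, having
positive measure, has an accumulation point; the identity theorem gives `F (·, w) = 0`.
-/

theorem volume_eq_zero_iff_ae_volume_preimage_cons_eq_zero {α : Type*} [MeasureSpace α]
    [SigmaFinite (volume : Measure α)] {d : ℕ} {Y : Set (Fin (d + 1) → α)}
    (hY : MeasurableSet Y) :
    volume Y = 0 ↔
      ∀ᵐ t : α, volume {w : Fin d → α | (Fin.cons t w : Fin (d + 1) → α) ∈ Y} = 0 := by
  have he := (volume_preserving_piFinSuccAbove (fun _ : Fin (d + 1) => α) 0).symm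
  have hcons : ⇑(MeasurableEquiv.piFinSuccAbove (fun _ : Fin (d + 1) => α) 0).symm =
      fun p => Fin.cons p.1 p.2 := by
    ext p i
    simp [MeasurableEquiv.piFinSuccAbove_symm_apply, Fin.insertNthEquiv]
  rw [← he.measure_preimage hY.nullMeasurableSet, Measure.volume_eq_prod,
    Measure.measure_prod_null (he.measurable hY), hcons]
  rfl

theorem Differentiable.eq_zero_of_volume_setOf_ofReal_eq_zero_ne_zero {E : Type*}
    [NormedAddCommGroup E] [NormedSpace ℂ E] [CompleteSpace E] {f : ℂ → E}
    (hf : Differentiable ℂ f) (h : volume {x : ℝ | f x = 0} ≠ 0) : f = 0 := by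
  obtain ⟨x, hx⟩ := exists_accPt_of_nullSingletonClass (pos_iff_ne_zero.2 h)
  have hxℂ : AccPt (x : ℂ) (𝓟 {z : ℂ | f z = 0}) := by
    refine (hx.map Complex.continuous_ofReal.continuousAt Complex.ofReal_injective).mono ?_
    rw [map_principal]
    exact principal_mono.2 (image_subset_iff.2 fun _ hy => hy)
  exact AnalyticOnNhd.eq_of_frequently_eq (fun z _ => hf.analyticAt z) analyticOnNhd_const
    (accPt_iff_frequently_nhdsNE.1 hxℂ)

theorem Differentiable.eq_zero_of_volume_setOf_pi_ofReal_eq_zero_ne_zero {E : Type*}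
    [NormedAddCommGroup E] [NormedSpace ℂ E] [CompleteSpace E] {d : ℕ} {F : (Fin d → ℂ) → E}
    (hF : Differentiable ℂ F) (h : volume {x : Fin d → ℝ | F (fun i => (x i : ℂ)) = 0} ≠ 0) :
    F = 0 := by
  induction d with
  | zero =>
    obtain ⟨x, hx⟩ := nonempty_of_measure_ne_zero h
    funext z
    rwa [Subsingleton.elim z fun i => (x i : ℂ)]
  | succ d ih =>
    set Z := {x : Fin (d + 1) → ℝ | F (fun i => (x i : ℂ)) = 0}
    have hZ : MeasurableSet Z :=
      (isClosed_eq (hF.continuous.comp (by fun_prop)) continuous_const).measurableSet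
    have hfiber (t : ℝ) (ht : volume {w | (Fin.cons t w : Fin (d + 1) → ℝ) ∈ Z} ≠ 0)
        (v : Fin d → ℂ) : F (Fin.cons (t : ℂ) v) = 0 := by
      refine congrFun (ih (F := fun v => F (Fin.cons (t : ℂ) v)) (by fun_prop) ?_) v
      convert ht using 3
      ext w
      exact (congrArg (F · = 0) (Fin.comp_cons Complex.ofReal t w).symm).to_iff
    have hA : volume {t : ℝ | volume {w | (Fin.cons t w : Fin (d + 1) → ℝ) ∈ Z} ≠ 0} ≠ 0 := by
      simpa only [ae_iff] using (volume_eq_zero_iff_ae_volume_preimage_cons_eq_zero hZ).not.1 h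
    funext z
    rw [← Fin.cons_self_tail z]
    refine congrFun (Differentiable.eq_zero_of_volume_setOf_ofReal_eq_zero_ne_zero
      (f := fun s => F (Fin.cons s (Fin.tail z))) (by fun_prop) ?_) (z 0)
    exact fun h0 => hA (measure_mono_null (fun t ht => hfiber t ht _) h0)

theorem stmt4_general {d : ℕ} (F : (Fin d → ℂ) → ℂ)
    (hF : AnalyticOnNhd ℂ F Set.univ)
    (Y : Set (Fin d → ℝ)) (hY : 0 < volume Y)
    (hvanish : ∀ x ∈ Y, F (fun i => (x i : ℂ)) = 0) :
    ∀ z : Fin d → ℂ, F z = 0 := by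
  have hdiff : Differentiable ℂ F := fun z => (hF z (mem_univ z)).differentiableAt
  have hzeros : volume {x : Fin d → ℝ | F (fun i => (x i : ℂ)) = 0} ≠ 0 :=
    (hY.trans_le (measure_mono hvanish)).ne'
  exact congrFun (hdiff.eq_zero_of_volume_setOf_pi_ofReal_eq_zero_ne_zero hzeros)

/-- If an entire function `F : ℂ^d → ℂ` vanishes on a measurable set `Y ⊆ ℝ^d ⊆ ℂ^d`
of positive `d`-dimensional Lebesgue measure, then `F` vanishes identically. -/
theorem stmt4 {d : ℕ} (F : (Fin d → ℂ) → ℂ)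
    (hF : AnalyticOnNhd ℂ F Set.univ)
    (Y : Set (Fin d → ℝ)) (hYm : MeasurableSet Y) (hY : 0 < volume Y)
    (hvanish : ∀ x ∈ Y, F (fun i => (x i : ℂ)) = 0) :
    ∀ z : Fin d → ℂ, F z = 0 :=
  stmt4_general F hF Y hY hvanish
end

section
/- Let Λ ⊆ ℝ^d be a lattice with dual lattice Λ*, and let G(t) = Σ_{λ∈Λ} c_λ e^{-2πi λ·t} with (c_λ) ∈ ℓ²(Λ) (convergence in L²_loc, G being Λ*-periodic). Let φ ∈ L²(ℝ^d) be such that A ≤ Σ_{λ*∈Λ*} |Fφ(t+λ*)|² almost everywhere for some A > 0. If G(t)·Fφ(t) = 0 for almost every t ∈ ℝ^d, then G = 0 almost everywhere, and hence c_λ = 0 for all λ ∈ Λ. -/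
open MeasureTheory Real Matrix

/-- The Fourier transform on `ℝ^d` (with kernel `e^{-2πi ω·t}`), given by the
defining integral. -/
noncomputable def fourierTr {d : ℕ} (φ : (Fin d → ℝ) → ℂ) (ω : Fin d → ℝ) : ℂ :=
  ∫ t : Fin d → ℝ, φ t * Complex.exp (-(2 * π * Complex.I) * (∑ i, ω i * t i : ℝ))

/-!
Translating `G · Fφ = 0` by a period `λ*` of `G` gives `G(t) · Fφ(t + λ*) = 0` for a.e. `t`,
simultaneously for all of the countably many `λ* ∈ Λ*`. Wherever `G(t) ≠ 0` all the translates
`Fφ(t + λ*)` vanish, contradicting `A ≤ ∑ |Fφ(t + λ*)|²` with `A > 0`. So `G = 0` a.e., and its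
Fourier coefficients, being integrals of `G` against bounded functions, vanish.
-/

section

variable {E R : Type*} [MeasurableSpace E] {μ : Measure E}

theorem mul_comp_add_right_ae_eq_zero [AddGroup E] [MeasurableAdd E] [μ.IsAddRightInvariant]
    [MulZeroClass R] {G F : E → R} {a : E}
    (hGper : (fun t => G (t + a)) =ᵐ[μ] G) (hzero : (fun t => G t * F t) =ᵐ[μ] 0) :
    (fun t => G t * F (t + a)) =ᵐ[μ] 0 := by
  have hshifted : (fun t => G (t + a) * F (t + a)) =ᵐ[μ] 0 :=
    (measurePreserving_add_right μ a).quasiMeasurePreserving.ae_eq_comp hzero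
  filter_upwards [hshifted, hGper] with t ht hGt
  rwa [hGt] at ht

theorem ae_eq_zero_of_mul_translates_ae_eq_zero [Add E] [NormedRing R] [NoZeroDivisors R]
    {ι : Type*} [Countable ι] {G F : E → R} (v : ι → E) {A : ℝ} (hA : 0 < A)
    (hlow : ∀ᵐ t ∂μ, A ≤ ∑' i, ‖F (t + v i)‖ ^ 2)
    (hzero : ∀ i, (fun t => G t * F (t + v i)) =ᵐ[μ] 0) :
    G =ᵐ[μ] 0 := by
  filter_upwards [ae_all_iff.mpr hzero, hlow] with t hprod hAt
  by_contra hGt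
  have hF : ∀ i, F (t + v i) = 0 := fun i => (mul_eq_zero.mp (hprod i)).resolve_left hGt
  simp only [hF, norm_zero, zero_pow two_ne_zero, tsum_zero] at hAt
  exact hAt.not_gt hA

end

theorem stmt15_general {d : ℕ} (M : Matrix (Fin d) (Fin d) ℝ)
    (G : (Fin d → ℝ) → ℂ)
    (hGper : ∀ w : Fin d → ℤ,
      (fun t => G (t + (Mᵀ)⁻¹.mulVec (fun i => (w i : ℝ)))) =ᵐ[(volume : Measure (Fin d → ℝ))] G)
    (c : (Fin d → ℤ) → ℂ)
    (hcoef : ∀ z : Fin d → ℤ, c z = |M.det| •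
      ∫ t in (fun v => (Mᵀ)⁻¹.mulVec v) '' Set.Icc (0 : Fin d → ℝ) 1,
        G t * Complex.exp (2 * π * Complex.I *
          (∑ i, (M.mulVec (fun i => (z i : ℝ))) i * t i : ℝ)))
    (φ : (Fin d → ℝ) → ℂ)
    (A : ℝ) (hA : 0 < A)
    (hlow : ∀ᵐ t : Fin d → ℝ ∂volume,
      A ≤ ∑' w : Fin d → ℤ, ‖fourierTr φ (t + (Mᵀ)⁻¹.mulVec (fun i => (w i : ℝ)))‖ ^ 2)
    (hzero : (fun t => G t * fourierTr φ t) =ᵐ[(volume : Measure (Fin d → ℝ))]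
      (0 : (Fin d → ℝ) → ℂ)) :
    (G =ᵐ[(volume : Measure (Fin d → ℝ))] (0 : (Fin d → ℝ) → ℂ)) ∧
      ∀ z : Fin d → ℤ, c z = 0 := by
  have hG : G =ᵐ[volume] 0 :=
    ae_eq_zero_of_mul_translates_ae_eq_zero _ hA hlow
      fun w => mul_comp_add_right_ae_eq_zero (hGper w) hzero
  refine ⟨hG, fun z => ?_⟩
  rw [hcoef z, setIntegral_eq_zero_of_ae_eq_zero, smul_zero]
  filter_upwards [hG] with t ht _
  simp [ht]

/-- Let `Λ = Mℤ^d` with dual `Λ* = M^{-T}ℤ^d`, let `G` be a `Λ*`-periodic function whose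
Fourier coefficients with respect to `Λ*` (computed on the fundamental domain
`P(Λ*) = M^{-T}[0,1]^d`) are `(c_λ)_{λ∈Λ} ∈ ℓ²`, and let `φ ∈ L²` satisfy
`A ≤ ∑_{λ*∈Λ*} |Fφ(t+λ*)|²` a.e. for some `A > 0`. If `G·Fφ = 0` a.e., then `G = 0`
a.e. and all coefficients `c_λ` vanish. -/
theorem stmt15 {d : ℕ} (M : Matrix (Fin d) (Fin d) ℝ) (hM : IsUnit M.det)
    (G : (Fin d → ℝ) → ℂ) (hGm : AEStronglyMeasurable G (volume : Measure (Fin d → ℝ)))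
    (hGper : ∀ w : Fin d → ℤ,
      (fun t => G (t + (Mᵀ)⁻¹.mulVec (fun i => (w i : ℝ)))) =ᵐ[(volume : Measure (Fin d → ℝ))] G)
    (c : (Fin d → ℤ) → ℂ) (hc : Memℓp c 2)
    (hcoef : ∀ z : Fin d → ℤ, c z = |M.det| •
      ∫ t in (fun v => (Mᵀ)⁻¹.mulVec v) '' Set.Icc (0 : Fin d → ℝ) 1,
        G t * Complex.exp (2 * π * Complex.I *
          (∑ i, (M.mulVec (fun i => (z i : ℝ))) i * t i : ℝ)))
    (φ : (Fin d → ℝ) → ℂ) (hφ : MemLp φ 2 (volume : Measure (Fin d → ℝ)))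
    (A : ℝ) (hA : 0 < A)
    (hlow : ∀ᵐ t : Fin d → ℝ ∂volume,
      A ≤ ∑' w : Fin d → ℤ, ‖fourierTr φ (t + (Mᵀ)⁻¹.mulVec (fun i => (w i : ℝ)))‖ ^ 2)
    (hzero : (fun t => G t * fourierTr φ t) =ᵐ[(volume : Measure (Fin d → ℝ))]
      (0 : (Fin d → ℝ) → ℂ)) :
    (G =ᵐ[(volume : Measure (Fin d → ℝ))] (0 : (Fin d → ℝ) → ℂ)) ∧
      ∀ z : Fin d → ℤ, c z = 0 :=
  stmt15_general M G hGper c hcoef φ A hA hlow hzero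
end
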